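/- Suppose G is a critically s-chromatic finite simple graph and W is an independent set of G that is not maximal, i.e., there exists a vertex x ∉ W such that W ∪ {x} is an independent set. Then the expansion G[W] satisfies χ(G[W]) = s. -/

import Mathlib

open SimpleGraph MvPolynomial

/-- The chromatic number of a graph, as a natural number: the least `m` such
that `G` has a proper `m`-coloring. -/
noncomputable def chromNum {V : Type*} (G : SimpleGraph V) : ℕ :=
  sInf {m | G.Colorable m}

/-- `G` is critically `s`-chromatic: `χ(G) = s` and deleting any vertex drops
the chromatic number to `s - 1`. -/
def CriticallyChromatic {V : Type*} (G : SimpleGraph V) (s : ℕ) : Prop :=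
  chromNum G = s ∧ ∀ v : V, chromNum (G.induce {v}ᶜ) = s - 1

/-- The expansion `G[W]` of a graph `G` at a set of vertices `W`: each vertex
`w ∈ W` is replaced by two adjacent copies (`Sum.inl w` and `Sum.inr w`), each
adjacent to (both copies of) the neighbors of `w`. -/
def expansion {V : Type*} (G : SimpleGraph V) (W : Set V) : SimpleGraph (V ⊕ W) :=
  SimpleGraph.fromRel (fun a b =>
    match a, b with
    | Sum.inl u, Sum.inl v => G.Adj u v
    | Sum.inl u, Sum.inr w => G.Adj u (w : V) ∨ u = (w : V)
    | Sum.inr _, Sum.inl _ => False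
    | Sum.inr w, Sum.inr w' => G.Adj (w : V) (w' : V))

/-- The `s`-th expansion `G^s` of `G`: every vertex is replaced by a clique of
size `s` (its shadows), and shadows of adjacent vertices are adjacent. -/
def nExpansion {V : Type*} (G : SimpleGraph V) (s : ℕ) : SimpleGraph (V × Fin s) :=
  SimpleGraph.fromRel (fun a b => G.Adj a.1 b.1 ∨ a.1 = b.1)

/-- `W` is an independent set of `G`. -/
def IsIndepSet {V : Type*} (G : SimpleGraph V) (W : Set V) : Prop :=
  ∀ ⦃u v⦄, u ∈ W → v ∈ W → ¬ G.Adj u v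

/-- `W` is a maximal independent set of `G`. -/
def IsMaxIndepSet {V : Type*} (G : SimpleGraph V) (W : Set V) : Prop :=
  _root_.IsIndepSet G W ∧ ∀ W', _root_.IsIndepSet G W' → W ⊆ W' → W = W'

/-- `W` is a vertex cover of `G`. -/
def IsVertexCover {V : Type*} (G : SimpleGraph V) (W : Set V) : Prop :=
  ∀ ⦃u v⦄, G.Adj u v → u ∈ W ∨ v ∈ W

/-- `W` is a minimal vertex cover of `G`. -/
def IsMinVertexCover {V : Type*} (G : SimpleGraph V) (W : Set V) : Prop :=
  _root_.IsVertexCover G W ∧ ∀ W' ⊆ W, _root_.IsVertexCover G W' → W' = W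

/-- `G` has a `b`-fold coloring using (at most) `d` colors: each vertex gets a
set of `b` colors, adjacent vertices getting disjoint sets. -/
def FoldColorable {V : Type*} (G : SimpleGraph V) (b d : ℕ) : Prop :=
  ∃ f : V → Finset (Fin d), (∀ v, (f v).card = b) ∧
    ∀ ⦃u v⦄, G.Adj u v → Disjoint (f u) (f v)

/-- The `b`-fold chromatic number `χ_b(G)`. -/
noncomputable def foldChromNum {V : Type*} (G : SimpleGraph V) (b : ℕ) : ℕ :=
  sInf {d | FoldColorable G b d}

/-- The fractional chromatic number `χ_f(G) = inf_b χ_b(G)/b`. -/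
noncomputable def fracChromNum {V : Type*} (G : SimpleGraph V) : ℝ :=
  ⨅ b : ℕ+, (foldChromNum G b : ℝ) / (b : ℝ)

/-- The cover ideal `J(G) = ⋂_{{i,j} ∈ E(G)} (x_i, x_j)` of a graph `G` on
`{x_1, …, x_n}`, inside `k[x_1, …, x_n]`. -/
noncomputable def coverIdeal (k : Type*) [Field k] {n : ℕ} (G : SimpleGraph (Fin n)) :
    Ideal (MvPolynomial (Fin n) k) :=
  ⨅ (i : Fin n) (j : Fin n) (_ : G.Adj i j),
    Ideal.span {MvPolynomial.X i, MvPolynomial.X j}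

/-!
Every coloring of `G[W]` restricts to one of `G`, so `χ(G[W]) ≥ χ(G)`. Conversely, color `G \ x`
with `s - 1` colors and give `x` a new color, so that `x` alone carries it. Keeping this coloring
on the original vertices and giving the new color to the second copy of every `w ∈ W` colors
`G[W]` properly, because `W ∪ {x}` is independent and `x ∉ W`.
-/

section ChromNum

variable {V V' : Type*} {G : SimpleGraph V} {G' : SimpleGraph V'} {m : ℕ}

theorem chromNum_le_of_colorable (h : G.Colorable m) : chromNum G ≤ m :=
  Nat.sInf_le h

theorem colorable_chromNum (h : G.Colorable m) : G.Colorable (chromNum G) :=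
  Nat.sInf_mem (s := {k | G.Colorable k}) ⟨m, h⟩

theorem colorable_chromNum_of_pos (h : 0 < chromNum G) : G.Colorable (chromNum G) :=
  Nat.sInf_mem (Nat.nonempty_of_pos_sInf h)

theorem chromNum_le_of_hom (f : G →g G') (h : G'.Colorable m) : chromNum G ≤ chromNum G' :=
  chromNum_le_of_colorable ((colorable_chromNum h).of_hom f)

theorem chromNum_eq_zero_of_hom [Nonempty V] (f : G →g G') (h : chromNum G = 0) :
    chromNum G' = 0 := by
  refine Nat.sInf_eq_zero.2 (Or.inr (Set.eq_empty_of_forall_notMem fun k hk => ?_))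
  have h0 : G.Colorable 0 := h ▸ colorable_chromNum (Colorable.of_hom f hk)
  exact (colorable_zero_iff.1 h0).false (Classical.arbitrary V)

end ChromNum

section Expansion

variable {V : Type*} {G : SimpleGraph V} {W : Set V}

@[simp]
theorem expansion_adj_inl_inl {u v : V} :
    (expansion G W).Adj (Sum.inl u) (Sum.inl v) ↔ G.Adj u v := by
  simp only [expansion, fromRel_adj, ne_eq, Sum.inl.injEq]
  exact ⟨fun h => h.2.elim id .symm, fun h => ⟨h.ne, Or.inl h⟩⟩

@[simp]
theorem expansion_adj_inl_inr {u : V} {w : W} :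
    (expansion G W).Adj (Sum.inl u) (Sum.inr w) ↔ G.Adj u w ∨ u = w := by
  simp [expansion]

@[simp]
theorem expansion_adj_inr_inr {w w' : W} :
    (expansion G W).Adj (Sum.inr w) (Sum.inr w') ↔ G.Adj w w' := by
  simp only [expansion, fromRel_adj, ne_eq, Sum.inr.injEq]
  exact ⟨fun h => h.2.elim id .symm, fun h => ⟨fun he => h.ne (he ▸ rfl), Or.inl h⟩⟩

def expansionInl : G →g expansion G W :=
  ⟨Sum.inl, expansion_adj_inl_inl.2⟩

def SimpleGraph.Coloring.toExpansion {α : Type*} (c : G.Coloring α) (a : α)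
    (hdisj : Disjoint (c.colorClass a) W) (hind : _root_.IsIndepSet G (W ∪ c.colorClass a)) :
    (expansion G W).Coloring α :=
  Coloring.mk (Sum.elim c fun _ => a) <| by
    have hW : ∀ u, c u = a → ∀ w : W, ¬ (G.Adj u w ∨ u = w) := fun u hu w =>
      not_or.2 ⟨hind (Or.inr hu) (Or.inl w.2), fun he => hdisj.ne_of_mem hu w.2 he⟩
    rintro (u | w) (v | w') h
    · exact c.valid (expansion_adj_inl_inl.1 h)
    · exact fun hu => hW u hu w' (expansion_adj_inl_inr.1 h)
    · exact fun hv => hW v hv.symm w (expansion_adj_inl_inr.1 h.symm)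
    · exact absurd (expansion_adj_inr_inr.1 h) (hind (Or.inl w.2) (Or.inl w'.2))

def SimpleGraph.Coloring.extendOption [DecidableEq V] {α : Type*} (x : V)
    (c : (G.induce {x}ᶜ).Coloring α) : G.Coloring (Option α) :=
  Coloring.mk (fun v => if h : v = x then none else some (c ⟨v, h⟩)) <| by
    intro u v huv
    by_cases hu : u = x <;> by_cases hv : v = x
    · exact absurd (hu.trans hv.symm) huv.ne
    all_goals simp only [hu, hv, dite_true, dite_false, ne_eq, reduceCtorEq,
      not_false_eq_true, Option.some.injEq]
    exact c.valid (by simpa using huv)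

theorem SimpleGraph.Coloring.colorClass_extendOption_none [DecidableEq V] {α : Type*} (x : V)
    (c : (G.induce {x}ᶜ).Coloring α) : (c.extendOption x).colorClass none = {x} := by
  ext v
  by_cases hv : v = x <;> simp [Coloring.colorClass, Coloring.extendOption, Coloring.mk, hv]

theorem colorable_expansion_of_colorable_induce_compl {x : V} {n : ℕ} (hxW : x ∉ W)
    (hind : _root_.IsIndepSet G (W ∪ {x})) (h : (G.induce {x}ᶜ).Colorable n) :
    (expansion G W).Colorable (n + 1) := by
  classical
  obtain ⟨c⟩ := h
  have hclass := c.colorClass_extendOption_none x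
  simpa using ((c.extendOption x).toExpansion none (by simpa [hclass] using hxW)
    (hclass ▸ hind)).colorable

theorem chromNum_expansion_eq {x : V} (hxW : x ∉ W) (hind : _root_.IsIndepSet G (W ∪ {x}))
    (hlt : chromNum (G.induce {x}ᶜ) < chromNum G) : chromNum (expansion G W) = chromNum G := by
  have hG := colorable_chromNum_of_pos (Nat.zero_lt_of_lt hlt)
  have hexp := colorable_expansion_of_colorable_induce_compl hxW hind
    (colorable_chromNum (hG.of_hom (Embedding.induce {x}ᶜ).toHom))
  exact le_antisymm ((chromNum_le_of_colorable hexp).trans hlt)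
    (chromNum_le_of_hom expansionInl hexp)

end Expansion

theorem expansion_at_nonmaximal_indep_general {V : Type}
    (G : SimpleGraph V) (s : ℕ) (hG : CriticallyChromatic G s)
    (W : Set V)
    (hnonmax : ∃ x : V, x ∉ W ∧ _root_.IsIndepSet G (W ∪ {x})) :
    chromNum (expansion G W) = s := by
  obtain ⟨x, hxW, hind⟩ := hnonmax
  obtain ⟨rfl, hcrit⟩ := hG
  rcases Nat.eq_zero_or_pos (chromNum G) with h0 | hpos
  · -- `chromNum G = 0` with `x : V` means that `G` has no finite coloring, so neither has `G[W]`.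
    have : Nonempty V := ⟨x⟩
    rw [h0]
    exact chromNum_eq_zero_of_hom expansionInl h0
  · exact chromNum_expansion_eq hxW hind (by rw [hcrit x]; omega)

/-- If `G` is critically `s`-chromatic and `W` is an
independent set that is not maximal, then `χ(G[W]) = s`. -/
theorem expansion_at_nonmaximal_indep {V : Type} [Fintype V]
    (G : SimpleGraph V) (s : ℕ) (hG : CriticallyChromatic G s)
    (W : Set V) (hW : _root_.IsIndepSet G W)
    (hnonmax : ∃ x : V, x ∉ W ∧ _root_.IsIndepSet G (W ∪ {x})) :
    chromNum (expansion G W) = s :=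
  expansion_at_nonmaximal_indep_general G s hG W hnonmax
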